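/- (Indirect consistency.) Let Δ = (𝒜, 𝒞, ⪯) be a well-defined SAF or well-defined c-SAF with ⪯ reasonable, and let E be an att-complete extension of Δ. Then Cl_Rs({Conc(A) : A ∈ E}) is consistent. -/

import Mathlib

/-!
Applying strict rules to members of `E` only yields arguments whose fallible sub-arguments
already lie in members of `E`. Every defeat targets a fallible sub-argument, so such arguments
are defended by `E` and, `E` being complete, belong to `E`. Hence every formula of the strict
closure is the conclusion of a member of `E`, and an inconsistency is a conflict between the
conclusions of two members `A`, `B` of `E`. If `B.conc` is a mere contrary of `A.conc`,
well-formedness makes the top of `A` fallible, so `B` attacks `A`. If the conclusions are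
contradictory, they do not follow from the axioms alone (axiom consistency), and contraposition
or transposition turns the conflict into a strict argument from `E` against a fallible
sub-argument of `A` or `B`, contradicting conflict-freeness. In a c-SAF, c-classicality shows in
the same way that the premises of `E` are jointly c-consistent, so all these arguments are
available.
-/

namespace ASPIC

/-- An inference rule over the language `L`: a list of antecedents and a consequent. -/
structure InfRule (L : Type) where
  ants : List L
  cons : L

/-- An ASPIC+ argumentation system: a contrariness function, disjoint sets of strict
and defeasible inference rules, and a naming function for (defeasible) rules;
every formula has at least one contradictory. -/
structure ArgSystem (L : Type) where
  contr : L → Set L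
  Rs : Set (InfRule L)
  Rd : Set (InfRule L)
  nm : InfRule L → L
  hdisj : Rs ∩ Rd = ∅
  hcontrad : ∀ φ : L, ∃ ψ : L, ψ ∈ contr φ ∧ φ ∈ contr ψ

/-- A knowledge base: disjoint axioms `Kn` and ordinary premises `Kp`. -/
structure KB (L : Type) where
  Kn : Set L
  Kp : Set L
  hdisj : Kn ∩ Kp = ∅

/-- Argument trees: a premise, or the application of an inference rule to a list of
sub-arguments.  (All such trees are finite.) -/
inductive Arg (L : Type) : Type where
  | prem : L → Arg L
  | app : List (Arg L) → InfRule L → Arg L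

namespace Arg

variable {L : Type}

/-- The conclusion of an argument. -/
def conc : Arg L → L
  | prem φ => φ
  | app _ r => r.cons

/-- The top rule of an argument (none for premises). -/
def topRule : Arg L → Option (InfRule L)
  | prem _ => none
  | app _ r => some r

mutual
  /-- The premises of an argument. -/
  def premises : Arg L → Set L
    | prem φ => {φ}
    | app l _ => premisesL l
  def premisesL : List (Arg L) → Set L
    | [] => ∅
    | a :: as => premises a ∪ premisesL as
end

mutual
  /-- The sub-arguments of an argument (including itself). -/
  def subs : Arg L → Set (Arg L)
    | prem φ => {Arg.prem φ}
    | app l r => subsL l ∪ {Arg.app l r}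
  def subsL : List (Arg L) → Set (Arg L)
    | [] => ∅
    | a :: as => subs a ∪ subsL as
end

mutual
  /-- The rules occurring in an argument. -/
  def rules : Arg L → Set (InfRule L)
    | prem _ => ∅
    | app l r => rulesL l ∪ {r}
  def rulesL : List (Arg L) → Set (InfRule L)
    | [] => ∅
    | a :: as => rules a ∪ rulesL as
end

mutual
  /-- The last defeasible rules of an argument (relative to the set `Rd` of
  defeasible rules). -/
  def lastDefRules (Rd : Set (InfRule L)) : Arg L → Set (InfRule L)
    | prem _ => ∅
    | app l r =>
        let rest := lastDefRulesL Rd l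
        {x | (r ∈ Rd ∧ x = r) ∨ (r ∉ Rd ∧ x ∈ rest)}
  def lastDefRulesL (Rd : Set (InfRule L)) : List (Arg L) → Set (InfRule L)
    | [] => ∅
    | a :: as => lastDefRules Rd a ∪ lastDefRulesL Rd as
end

end Arg

variable {L : Type}

/-- Well-formed arguments on the basis of an argumentation theory `(AS, K)`. -/
inductive IsArg (AS : ArgSystem L) (K : KB L) : Arg L → Prop where
  | prem {φ : L} : φ ∈ K.Kn ∪ K.Kp → IsArg AS K (.prem φ)
  | app {l : List (Arg L)} {r : InfRule L} :
      (∀ a ∈ l, IsArg AS K a) →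
      r ∈ AS.Rs ∪ AS.Rd →
      l.map Arg.conc = r.ants →
      IsArg AS K (.app l r)

/-- The defeasible rules of an argument. -/
def defRules (AS : ArgSystem L) (A : Arg L) : Set (InfRule L) := A.rules ∩ AS.Rd
/-- The strict rules of an argument. -/
def stRules (AS : ArgSystem L) (A : Arg L) : Set (InfRule L) := A.rules ∩ AS.Rs
/-- The ordinary premises of an argument. -/
def premP (K : KB L) (A : Arg L) : Set L := A.premises ∩ K.Kp
/-- The axiom premises of an argument. -/
def premN (K : KB L) (A : Arg L) : Set L := A.premises ∩ K.Kn
/-- An argument is strict if it uses no defeasible rules. -/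
def strictArg (AS : ArgSystem L) (A : Arg L) : Prop := defRules AS A = ∅
/-- An argument is firm if all its premises are axioms. -/
def firmArg (K : KB L) (A : Arg L) : Prop := A.premises ⊆ K.Kn

/-- `φ` is a contrary of `ψ`. -/
def contrary (AS : ArgSystem L) (φ ψ : L) : Prop := φ ∈ AS.contr ψ ∧ ψ ∉ AS.contr φ
/-- `φ` and `ψ` are contradictories of each other. -/
def contrad (AS : ArgSystem L) (φ ψ : L) : Prop := φ ∈ AS.contr ψ ∧ ψ ∈ AS.contr φ

/-- Strict derivability: `SDer AS S φ` iff there is a strict argument for `φ` all of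
whose premises lie in `S` (`S ⊢ φ`). -/
inductive SDer (AS : ArgSystem L) (S : Set L) : L → Prop where
  | prem {φ : L} : φ ∈ S → SDer AS S φ
  | rule {r : InfRule L} : r ∈ AS.Rs → (∀ ψ ∈ r.ants, SDer AS S ψ) → SDer AS S r.cons

/-- `S` is c-consistent: for no pair of contradictories are both strictly derivable. -/
def CCons (AS : ArgSystem L) (S : Set L) : Prop :=
  ∀ φ ψ : L, contrad AS φ ψ → ¬ (SDer AS S φ ∧ SDer AS S ψ)

/-- `S` is minimally c-inconsistent. -/
def MinCIncons (AS : ArgSystem L) (S : Set L) : Prop :=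
  ¬ CCons AS S ∧ ∀ S' ⊂ S, CCons AS S'

/-- Closure under strict rules. -/
inductive ClRs (AS : ArgSystem L) (S : Set L) : L → Prop where
  | base {φ : L} : φ ∈ S → ClRs AS S φ
  | step {r : InfRule L} : r ∈ AS.Rs → (∀ ψ ∈ r.ants, ClRs AS S ψ) → ClRs AS S r.cons

/-- Direct consistency of a set of formulas. -/
def Consistent (AS : ArgSystem L) (S : Set L) : Prop :=
  ¬ ∃ φ ψ : L, φ ∈ S ∧ ψ ∈ S ∧ ψ ∈ AS.contr φ

/-- The argumentation theory is closed under contraposition. -/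
def ContraClosed (AS : ArgSystem L) : Prop :=
  ∀ (S : Set L) (s : L), s ∈ S → ∀ φ : L, SDer AS S φ →
    ∀ nφ : L, contrad AS φ nφ →
      ∃ ns : L, contrad AS s ns ∧ SDer AS ((S \ {s}) ∪ {nφ}) ns

/-- The argumentation theory is closed under transposition. -/
def TransClosed (AS : ArgSystem L) : Prop :=
  ∀ r ∈ AS.Rs, ∀ i : Fin r.ants.length, ∀ nψ : L, contrad AS r.cons nψ →
    ∃ nφ : L, contrad AS (r.ants.get i) nφ ∧
      ({ ants := r.ants.set i.1 nψ, cons := nφ } : InfRule L) ∈ AS.Rs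

/-- Axiom consistency: the strict closure of the axioms is consistent. -/
def AxiomConsistent (AS : ArgSystem L) (K : KB L) : Prop :=
  Consistent AS {φ | ClRs AS K.Kn φ}

/-- c-classicality. -/
def CClassical (AS : ArgSystem L) : Prop :=
  ∀ S : Set L, MinCIncons AS S → ∀ φ ∈ S,
    ∃ nφ : L, contrad AS φ nφ ∧ SDer AS (S \ {φ}) nφ

/-- Well-formedness: contraried formulas are neither axioms nor consequents of strict rules. -/
def WellFormed (AS : ArgSystem L) (K : KB L) : Prop :=
  ∀ φ ψ : L, contrary AS φ ψ → ψ ∉ K.Kn ∧ ∀ r ∈ AS.Rs, r.cons ≠ ψ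

/-- Well-definedness for SAFs. -/
def WellDefinedSAF (AS : ArgSystem L) (K : KB L) : Prop :=
  AxiomConsistent AS K ∧ WellFormed AS K ∧ (ContraClosed AS ∨ TransClosed AS)

/-- Well-definedness for c-SAFs. -/
def WellDefinedCSAF (AS : ArgSystem L) (K : KB L) : Prop :=
  WellDefinedSAF AS K ∧ CClassical AS

/-- The arguments of the SAF defined by `(AS,K)`: all (finite) arguments. -/
def ArgsSAF (AS : ArgSystem L) (K : KB L) : Set (Arg L) := {A | IsArg AS K A}

/-- The arguments of the c-SAF defined by `(AS,K)`: all (finite) c-consistent arguments. -/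
def ArgsCSAF (AS : ArgSystem L) (K : KB L) : Set (Arg L) :=
  {A | IsArg AS K A ∧ CCons AS A.premises}

/-- `A` undercuts `B` on `B'`. -/
def undercutsOn (AS : ArgSystem L) (A B B' : Arg L) : Prop :=
  B' ∈ B.subs ∧ ∃ r ∈ AS.Rd, B'.topRule = some r ∧ A.conc ∈ AS.contr (AS.nm r)

/-- `A` rebuts `B` on `B'`. -/
def rebutsOn (AS : ArgSystem L) (A B B' : Arg L) : Prop :=
  B' ∈ B.subs ∧ ∃ r ∈ AS.Rd, B'.topRule = some r ∧ A.conc ∈ AS.contr B'.conc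

/-- `A` undermines `B` on `B'`. -/
def underminesOn (AS : ArgSystem L) (K : KB L) (A B B' : Arg L) : Prop :=
  B' ∈ B.subs ∧ ∃ φ ∈ K.Kp, B' = Arg.prem φ ∧ A.conc ∈ AS.contr φ

/-- `A` attacks `B` on `B'`. -/
def attacksOn (AS : ArgSystem L) (K : KB L) (A B B' : Arg L) : Prop :=
  undercutsOn AS A B B' ∨ rebutsOn AS A B B' ∨ underminesOn AS K A B B'

/-- `A` attacks `B`. -/
def attacks (AS : ArgSystem L) (K : KB L) (A B : Arg L) : Prop :=
  ∃ B', attacksOn AS K A B B'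

/-- Preference-independent attacks: undercuts, contrary-rebuts and contrary-undermines. -/
def prefIndepOn (AS : ArgSystem L) (K : KB L) (A B B' : Arg L) : Prop :=
  undercutsOn AS A B B' ∨
  (rebutsOn AS A B B' ∧ contrary AS A.conc B'.conc) ∨
  (underminesOn AS K A B B' ∧ contrary AS A.conc B'.conc)

/-- Preference-dependent attacks. -/
def prefDepOn (AS : ArgSystem L) (K : KB L) (A B B' : Arg L) : Prop :=
  attacksOn AS K A B B' ∧ ¬ prefIndepOn AS K A B B'

/-- The strict counterpart `≺` of an ordering `⪯`. -/
def sprec (pre : Arg L → Arg L → Prop) (X Y : Arg L) : Prop := pre X Y ∧ ¬ pre Y X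

/-- `A` defeats `B`, relative to a strict preference relation `slt` (`≺`). -/
def defeats (AS : ArgSystem L) (K : KB L) (slt : Arg L → Arg L → Prop) (A B : Arg L) : Prop :=
  ∃ B', prefIndepOn AS K A B B' ∨ (prefDepOn AS K A B B' ∧ ¬ slt A B')

/-- `A` is a strict continuation of the set of arguments `Γ`. -/
def StrictCont (AS : ArgSystem L) (K : KB L) (A : Arg L) (Γ : Set (Arg L)) : Prop :=
  premP K A = (⋃ B ∈ Γ, premP K B) ∧
  defRules AS A = (⋃ B ∈ Γ, defRules AS B) ∧
  (⋃ B ∈ Γ, stRules AS B) ⊆ stRules AS A ∧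
  (⋃ B ∈ Γ, premN K B) ⊆ premN K A

/-- `B'` has a fallible top: a defeasible top rule, or an ordinary premise. -/
def fallibleTop (AS : ArgSystem L) (K : KB L) (B' : Arg L) : Prop :=
  (∃ r ∈ AS.Rd, B'.topRule = some r) ∨ (∃ φ ∈ K.Kp, B' = Arg.prem φ)

/-- `M(B)`: the maximal fallible sub-arguments of `B`. -/
def MSet (AS : ArgSystem L) (K : KB L) (B : Arg L) : Set (Arg L) :=
  {B' | B' ∈ B.subs ∧ fallibleTop AS K B' ∧
    ¬ ∃ B'', B'' ∈ B.subs ∧ B'' ≠ B ∧ B'' ≠ B' ∧ fallibleTop AS K B'' ∧ B' ∈ B''.subs}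

/-- A reasonable argument ordering. -/
def Reasonable (AS : ArgSystem L) (K : KB L) (pre : Arg L → Arg L → Prop) : Prop :=
  (∀ A B : Arg L, strictArg AS A → firmArg K A →
      (¬ firmArg K B ∨ ¬ strictArg AS B) → sprec pre B A) ∧
  (∀ A B : Arg L, strictArg AS B → firmArg K B → ¬ sprec pre B A) ∧
  (∀ A A' B : Arg L, StrictCont AS K A' {A} →
      (¬ sprec pre A B → ¬ sprec pre A' B) ∧ (¬ sprec pre B A → ¬ sprec pre B A')) ∧
  (∀ s : Finset (Arg L), s.Nonempty → ∀ f : Arg L → Arg L,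
      (∀ C ∈ s, StrictCont AS K (f C) ((↑s : Set (Arg L)) \ {C})) →
      ¬ (∀ C ∈ s, sprec pre (f C) C))

/-- Conflict-freeness of `S` with respect to a relation (attack or defeat). -/
def CFwrt (rel : Arg L → Arg L → Prop) (S : Set (Arg L)) : Prop :=
  ∀ X ∈ S, ∀ Y ∈ S, ¬ rel X Y

/-- `A` is acceptable with respect to `S` (all its defeaters in `𝒜` are defeated from `S`). -/
def Acceptable (𝒜 : Set (Arg L)) (df : Arg L → Arg L → Prop)
    (S : Set (Arg L)) (A : Arg L) : Prop :=
  ∀ B ∈ 𝒜, df B A → ∃ C ∈ S, df C B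

/-- Admissible sets, relative to a conflict-freeness notion `cf` and defeat relation `df`. -/
def Admissible (𝒜 : Set (Arg L)) (cf : Set (Arg L) → Prop)
    (df : Arg L → Arg L → Prop) (S : Set (Arg L)) : Prop :=
  S ⊆ 𝒜 ∧ cf S ∧ ∀ A ∈ S, Acceptable 𝒜 df S A

/-- Complete extensions. -/
def Complete (𝒜 : Set (Arg L)) (cf : Set (Arg L) → Prop)
    (df : Arg L → Arg L → Prop) (S : Set (Arg L)) : Prop :=
  Admissible 𝒜 cf df S ∧ ∀ A ∈ 𝒜, Acceptable 𝒜 df S A → A ∈ S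

/-- Preferred extensions: ⊆-maximal complete extensions. -/
def Preferred (𝒜 : Set (Arg L)) (cf : Set (Arg L) → Prop)
    (df : Arg L → Arg L → Prop) (S : Set (Arg L)) : Prop :=
  Complete 𝒜 cf df S ∧ ∀ S', Complete 𝒜 cf df S' → S ⊆ S' → S' = S

/-- The grounded extension: the ⊆-minimal complete extension. -/
def Grounded (𝒜 : Set (Arg L)) (cf : Set (Arg L) → Prop)
    (df : Arg L → Arg L → Prop) (S : Set (Arg L)) : Prop :=
  Complete 𝒜 cf df S ∧ ∀ S', Complete 𝒜 cf df S' → S ⊆ S'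

/-- Stable extensions. -/
def Stable (𝒜 : Set (Arg L)) (cf : Set (Arg L) → Prop)
    (df : Arg L → Arg L → Prop) (S : Set (Arg L)) : Prop :=
  Preferred 𝒜 cf df S ∧ ∀ B ∈ 𝒜, B ∉ S → ∃ A ∈ S, df A B

/-- The set of antecedents of a rule. -/
def antsSet {L : Type} (r : InfRule L) : Set L := {φ | φ ∈ r.ants}

end ASPIC

theorem List.exists_map_eq_of_forall_mem {α β : Type*} {f : α → β} {Q : α → Prop}
    {xs : List β} (h : ∀ b ∈ xs, ∃ a, f a = b ∧ Q a) :
    ∃ l : List α, l.map f = xs ∧ ∀ a ∈ l, Q a := by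
  choose g hg using h
  refine ⟨xs.pmap g fun _ => id, ?_, fun a ha => ?_⟩
  · rw [List.map_pmap]
    exact List.pmap_eq_self.2 fun b hb => (hg b hb).1
  · obtain ⟨b, hb, rfl⟩ := List.mem_pmap.1 ha
    exact (hg b hb).2

namespace ASPIC

variable {L : Type} {AS : ArgSystem L} {K : KB L} {S T : Set L}
  {slt : Arg L → Arg L → Prop} {𝒜 E : Set (Arg L)}

namespace Arg

mutual
theorem subs_trans : ∀ {A B C : Arg L}, B ∈ A.subs → C ∈ B.subs → C ∈ A.subs
  | prem _, _, _, hB, hC => by rw [subs, Set.mem_singleton_iff] at hB; subst hB; exact hC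
  | app _ _, _, _, hB, hC => by
    rcases hB with hB | hB
    · exact Or.inl (subsL_trans hB hC)
    · rw [Set.mem_singleton_iff] at hB; subst hB; exact hC
theorem subsL_trans :
    ∀ {l : List (Arg L)} {B C : Arg L}, B ∈ subsL l → C ∈ B.subs → C ∈ subsL l
  | [], _, _, hB, _ => hB.elim
  | _ :: _, _, _, hB, hC => hB.imp (subs_trans · hC) (subsL_trans · hC)
end

mutual
theorem premises_subset_of_mem_subs :
    ∀ {A B : Arg L}, B ∈ A.subs → B.premises ⊆ A.premises
  | prem _, _, hB => by rw [subs, Set.mem_singleton_iff] at hB; subst hB; rfl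
  | app _ _, _, hB => by
    rcases hB with hB | hB
    · exact premisesL_subset_of_mem_subsL hB
    · rw [Set.mem_singleton_iff] at hB; subst hB; rfl
theorem premisesL_subset_of_mem_subsL :
    ∀ {l : List (Arg L)} {B : Arg L}, B ∈ subsL l → B.premises ⊆ premisesL l
  | [], _, hB => hB.elim
  | _ :: _, _, hB => hB.elim
      (fun h => (premises_subset_of_mem_subs h).trans Set.subset_union_left)
      (fun h => (premisesL_subset_of_mem_subsL h).trans Set.subset_union_right)
end

mutual
theorem prem_mem_subs : ∀ {A : Arg L} {t : L}, t ∈ A.premises → prem t ∈ A.subs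
  | prem _, _, ht => by rw [premises, Set.mem_singleton_iff] at ht; subst ht; rfl
  | app _ _, _, ht => Or.inl (prem_mem_subsL ht)
theorem prem_mem_subsL : ∀ {l : List (Arg L)} {t : L}, t ∈ premisesL l → prem t ∈ subsL l
  | [], _, ht => ht.elim
  | _ :: _, _, ht => ht.imp prem_mem_subs prem_mem_subsL
end

theorem mem_subs_self (A : Arg L) : A ∈ A.subs := by
  cases A <;> simp [subs]

theorem mem_subsL {l : List (Arg L)} {B : Arg L} : B ∈ subsL l ↔ ∃ a ∈ l, B ∈ a.subs := by
  induction l <;> simp_all [subsL]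

theorem mem_premisesL {l : List (Arg L)} {t : L} :
    t ∈ premisesL l ↔ ∃ a ∈ l, t ∈ a.premises := by
  induction l <;> simp_all [premisesL]

theorem mem_subs_app {l : List (Arg L)} {r : InfRule L} {B : Arg L} :
    B ∈ (app l r).subs ↔ (∃ a ∈ l, B ∈ a.subs) ∨ B = app l r := by
  simp [subs, mem_subsL, or_comm]

theorem mem_premises_app {l : List (Arg L)} {r : InfRule L} {t : L} :
    t ∈ (app l r).premises ↔ ∃ a ∈ l, t ∈ a.premises := by
  simp [premises, mem_premisesL]

end Arg

namespace IsArg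

variable {A : Arg L}

theorem of_mem_subs (h : IsArg AS K A) {B : Arg L} (hB : B ∈ A.subs) : IsArg AS K B := by
  induction h with
  | prem hφ => rw [Arg.subs, Set.mem_singleton_iff] at hB; subst hB; exact prem hφ
  | app hl hr hmap ih =>
    rcases Arg.mem_subs_app.1 hB with ⟨a, ha, hBa⟩ | rfl
    · exact ih a ha hBa
    · exact app hl hr hmap

theorem premises_subset (h : IsArg AS K A) : A.premises ⊆ K.Kn ∪ K.Kp := by
  induction h with
  | prem hφ => simpa [Arg.premises] using hφ
  | app _ _ _ ih =>
    intro t ht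
    obtain ⟨a, ha, hta⟩ := Arg.mem_premises_app.1 ht
    exact ih a ha hta

end IsArg

namespace SDer

variable {χ : L}

theorem mono (hST : S ⊆ T) (h : SDer AS S χ) : SDer AS T χ := by
  induction h with
  | prem h => exact prem (hST h)
  | rule hr _ ih => exact rule hr ih

theorem cut {x : L} (hST : S ⊆ T) (h : SDer AS (S ∪ {x}) χ) (hx : SDer AS T x) :
    SDer AS T χ := by
  induction h with
  | prem h => exact h.elim (fun h => prem (hST h)) (fun h => h ▸ hx)
  | rule hr _ ih => exact rule hr ih

theorem clRs (h : SDer AS S χ) : ClRs AS S χ := by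
  induction h with
  | prem h => exact .base h
  | rule hr _ ih => exact .step hr ih

theorem exists_finite (h : SDer AS S χ) : ∃ U ⊆ S, U.Finite ∧ SDer AS U χ := by
  induction h with
  | @prem φ h => exact ⟨{φ}, by simpa using h, Set.finite_singleton φ, prem rfl⟩
  | @rule r hr _ ih =>
    choose U hUS hUfin hU using ih
    refine ⟨⋃ (ψ) (hψ : ψ ∈ r.ants), U ψ hψ, Set.iUnion₂_subset hUS,
      Set.Finite.biUnion' (s := {ψ | ψ ∈ r.ants}) r.ants.finite_toSet hUfin,
      rule hr fun ψ hψ =>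
        (hU ψ hψ).mono (Set.subset_iUnion₂ (s := fun ψ hψ => U ψ hψ) ψ hψ)⟩

end SDer

theorem ClRs.sDer {χ : L} (h : ClRs AS S χ) : SDer AS S χ := by
  induction h with
  | base h => exact .prem h
  | step hr _ ih => exact .rule hr ih

theorem CCons.mono (hST : S ⊆ T) (h : CCons AS T) : CCons AS S :=
  fun φ ψ hc hd => h φ ψ hc ⟨hd.1.mono hST, hd.2.mono hST⟩

theorem exists_minCIncons_subset (h : ¬ CCons AS T) : ∃ S ⊆ T, MinCIncons AS S := by
  obtain ⟨φ, ψ, hc, hφ, hψ⟩ :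
      ∃ φ ψ, contrad AS φ ψ ∧ SDer AS T φ ∧ SDer AS T ψ := by
    simpa [CCons] using h
  obtain ⟨U₁, hU₁T, hU₁, hφU⟩ := hφ.exists_finite
  obtain ⟨U₂, hU₂T, hU₂, hψU⟩ := hψ.exists_finite
  set U := U₁ ∪ U₂
  have hU : ¬ CCons AS U := fun hcons =>
    hcons φ ψ hc ⟨hφU.mono Set.subset_union_left, hψU.mono Set.subset_union_right⟩
  have hfin : {S | S ⊆ U ∧ ¬ CCons AS S}.Finite :=
    (hU₁.union hU₂).finite_subsets.subset fun _ hS => hS.1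
  obtain ⟨S, hSU, hS, hmin⟩ := hfin.exists_le_minimal ⟨subset_rfl, hU⟩
  refine ⟨S, hSU.trans (Set.union_subset hU₁T hU₂T), hS.2, fun S' hS'S => ?_⟩
  by_contra hS'
  exact hS'S.not_subset (hmin ⟨hS'S.subset.trans hSU, hS'⟩ hS'S.subset)

theorem cCons_of_subset_Kn (hax : AxiomConsistent AS K) (hS : S ⊆ K.Kn) :
    CCons AS S :=
  fun φ ψ hc hd => hax ⟨φ, ψ, (hd.1.mono hS).clRs, (hd.2.mono hS).clRs, hc.2⟩

theorem TransClosed.sDer_sdiff_or_exists_contrad (htrans : TransClosed AS) {χ : L}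
    (h : SDer AS S χ) {nχ : L} (hc : contrad AS χ nχ) (F : Set L) :
    SDer AS (S \ F) χ ∨ ∃ s ∈ F, ∃ ns, contrad AS s ns ∧ SDer AS (S ∪ {nχ}) ns := by
  induction h generalizing nχ with
  | @prem t ht =>
    by_cases htF : t ∈ F
    · exact Or.inr ⟨t, htF, nχ, hc, .prem (Or.inr rfl)⟩
    · exact Or.inl (.prem ⟨ht, htF⟩)
  | @rule r hr hants ih =>
    by_cases hall : ∀ i : Fin r.ants.length, SDer AS (S \ F) (r.ants.get i)
    · refine Or.inl (.rule hr fun ψ hψ => ?_)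
      obtain ⟨i, rfl⟩ := List.mem_iff_get.1 hψ
      exact hall i
    push Not at hall
    obtain ⟨i, hi⟩ := hall
    -- transposing `r` at its `i`-th antecedent derives a contradictory of that antecedent
    obtain ⟨nφ, hcφ, hrule⟩ := htrans r hr i nχ hc
    have hnφ : SDer AS (S ∪ {nχ}) nφ := by
      refine .rule hrule fun t ht => ?_
      rcases List.mem_or_eq_of_mem_set ht with ht | rfl
      · exact (hants t ht).mono Set.subset_union_left
      · exact .prem (Or.inr rfl)
    obtain ⟨s, hsF, ns, hns, hder⟩ := (ih _ (r.ants.get_mem i) hcφ).resolve_left hi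
    exact Or.inr ⟨s, hsF, ns, hns, hder.cut Set.subset_union_left hnφ⟩

theorem sDer_sdiff_or_exists_contrad (hclosed : ContraClosed AS ∨ TransClosed AS)
    {F : Set L} (hFS : F ⊆ S) {φ ψ : L} (hc : contrad AS φ ψ)
    (hφ : SDer AS S φ) (hψ : SDer AS S ψ) :
    (SDer AS (S \ F) φ ∧ SDer AS (S \ F) ψ) ∨
      ∃ s ∈ F, ∃ ns, contrad AS s ns ∧ SDer AS S ns := by
  rcases hclosed with hcontra | htrans
  · rcases F.eq_empty_or_nonempty with rfl | ⟨s, hsF⟩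
    · exact Or.inl (by rw [Set.sdiff_empty]; exact ⟨hφ, hψ⟩)
    obtain ⟨ns, hns, hder⟩ := hcontra S s (hFS hsF) φ hφ ψ hc
    exact Or.inr ⟨s, hsF, ns, hns,
      (hder.mono (Set.union_subset_union_left _ Set.sdiff_subset)).cut subset_rfl hψ⟩
  · rcases htrans.sDer_sdiff_or_exists_contrad hφ hc F with h₁ | ⟨s, hsF, ns, hns, hder⟩
    · rcases htrans.sDer_sdiff_or_exists_contrad hψ ⟨hc.2, hc.1⟩ F with
        h₂ | ⟨s, hsF, ns, hns, hder⟩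
      · exact Or.inl ⟨h₁, h₂⟩
      · exact Or.inr ⟨s, hsF, ns, hns, hder.cut subset_rfl hφ⟩
    · exact Or.inr ⟨s, hsF, ns, hns, hder.cut subset_rfl hψ⟩

theorem not_fallibleTop_app_of_mem_Rs {l : List (Arg L)} {r : InfRule L} (hr : r ∈ AS.Rs) :
    ¬ fallibleTop AS K (.app l r) := by
  rintro (⟨r', hr', htop⟩ | ⟨_, _, heq⟩)
  · cases htop
    exact (Set.eq_empty_iff_forall_notMem.1 AS.hdisj) r ⟨hr, hr'⟩
  · cases heq

theorem not_fallibleTop_prem_of_mem_Kn {t : L} (ht : t ∈ K.Kn) :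
    ¬ fallibleTop AS K (.prem t) := by
  rintro (⟨_, _, htop⟩ | ⟨φ, hφ, heq⟩)
  · cases htop
  · cases heq
    exact (Set.eq_empty_iff_forall_notMem.1 K.hdisj) t ⟨ht, hφ⟩

theorem fallibleTop_of_contrary_conc (hwf : WellFormed AS K) {A : Arg L} (hA : IsArg AS K A)
    {ψ : L} (hψ : contrary AS ψ A.conc) : fallibleTop AS K A := by
  obtain ⟨hKn, hRs⟩ := hwf ψ A.conc hψ
  cases hA with
  | prem hφ => exact Or.inr ⟨_, hφ.resolve_left hKn, rfl⟩
  | app _ hr _ => exact Or.inl ⟨_, hr.resolve_left fun h => hRs _ h rfl, rfl⟩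

theorem sDer_conc_of_fallibleTop {A : Arg L} (hA : IsArg AS K A) {V : Set L}
    (hfall : ∀ C ∈ A.subs, fallibleTop AS K C → C.conc ∈ V)
    (hax : A.premises ∩ K.Kn ⊆ V) : SDer AS V A.conc := by
  induction hA with
  | @prem t ht =>
    rcases ht with hn | hp
    · exact .prem (hax ⟨rfl, hn⟩)
    · exact .prem (hfall _ rfl (Or.inr ⟨t, hp, rfl⟩))
  | @app l r hl hr hmap ih =>
    rcases hr with hrs | hrd
    · refine .rule hrs fun ψ hψ => ?_
      rw [← hmap] at hψ
      obtain ⟨a, ha, rfl⟩ := List.mem_map.1 hψ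
      refine ih a ha (fun C hC => hfall C (Arg.mem_subs_app.2 (Or.inl ⟨a, ha, hC⟩))) ?_
      exact (Set.inter_subset_inter_left _ fun t ht => Arg.mem_premises_app.2 ⟨a, ha, ht⟩).trans
        hax
    · exact .prem (hfall _ (Arg.mem_subs_self _) (Or.inl ⟨r, hrd, rfl⟩))

theorem attacks_of_mem_contr_conc {C W C' : Arg L} (hC' : C' ∈ W.subs)
    (hfall : fallibleTop AS K C') (hconc : C.conc ∈ AS.contr C'.conc) : attacks AS K C W := by
  rcases hfall with ⟨r, hr, htop⟩ | ⟨t, ht, rfl⟩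
  · exact ⟨C', Or.inr (Or.inl ⟨hC', r, hr, htop, hconc⟩)⟩
  · exact ⟨_, Or.inr (Or.inr ⟨hC', t, ht, rfl, hconc⟩)⟩

section Transfer

variable {A B W B' : Arg L}

theorem fallibleTop_of_attacksOn (h : attacksOn AS K A B B') : fallibleTop AS K B' := by
  rcases h with ⟨_, r, hr, htop, _⟩ | ⟨_, r, hr, htop, _⟩ | ⟨_, φ, hφ, heq, _⟩
  · exact Or.inl ⟨r, hr, htop⟩
  · exact Or.inl ⟨r, hr, htop⟩
  · exact Or.inr ⟨φ, hφ, heq⟩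

theorem attacksOn_of_prefIndepOn (h : prefIndepOn AS K A B B') : attacksOn AS K A B B' := by
  rcases h with h | ⟨h, _⟩ | ⟨h, _⟩
  exacts [Or.inl h, Or.inr (Or.inl h), Or.inr (Or.inr h)]

theorem attacksOn_congr (hB : B' ∈ B.subs) (hW : B' ∈ W.subs) :
    attacksOn AS K A B B' ↔ attacksOn AS K A W B' := by
  simp only [attacksOn, undercutsOn, rebutsOn, underminesOn, hB, hW, true_and]

theorem prefIndepOn_congr (hB : B' ∈ B.subs) (hW : B' ∈ W.subs) :
    prefIndepOn AS K A B B' ↔ prefIndepOn AS K A W B' := by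
  simp only [prefIndepOn, undercutsOn, rebutsOn, underminesOn, hB, hW, true_and]

end Transfer

def FallibleSubsIn (AS : ArgSystem L) (K : KB L) (E : Set (Arg L)) (C : Arg L) : Prop :=
  ∀ B' ∈ C.subs, fallibleTop AS K B' → ∃ W ∈ E, B' ∈ W.subs

theorem acceptable_of_fallibleSubsIn
    (hE : ∀ W ∈ E, Acceptable 𝒜 (defeats AS K slt) E W) {C : Arg L}
    (hC : FallibleSubsIn AS K E C) : Acceptable 𝒜 (defeats AS K slt) E C := by
  rintro X hX ⟨B', hdef⟩
  have hatt : attacksOn AS K X C B' := hdef.elim attacksOn_of_prefIndepOn (·.1.1)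
  have hB'C : B' ∈ C.subs := by rcases hatt with h | h | h <;> exact h.1
  obtain ⟨W, hW, hB'W⟩ := hC B' hB'C (fallibleTop_of_attacksOn hatt)
  refine hE W hW X hX ⟨B', ?_⟩
  simpa only [prefDepOn, attacksOn_congr hB'C hB'W, prefIndepOn_congr hB'C hB'W] using hdef

def BuiltFrom (AS : ArgSystem L) (K : KB L) (E : Set (Arg L)) (P : Set L) (C : Arg L) : Prop :=
  IsArg AS K C ∧ FallibleSubsIn AS K E C ∧ C.premises ⊆ P

section BuiltFrom

variable {P : Set L}

theorem builtFrom_of_mem_subs {W C : Arg L} (hW : W ∈ E) (hWarg : IsArg AS K W)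
    (hC : C ∈ W.subs) (hP : C.premises ⊆ P) : BuiltFrom AS K E P C :=
  ⟨hWarg.of_mem_subs hC, fun _ hB' _ => ⟨W, hW, Arg.subs_trans hC hB'⟩, hP⟩

theorem builtFrom_prem_of_mem_Kn {t : L} (ht : t ∈ K.Kn) (htP : t ∈ P) :
    BuiltFrom AS K E P (.prem t) := by
  refine ⟨.prem (Or.inl ht), fun B' hB' hfall => ?_, by simpa [Arg.premises] using htP⟩
  cases hB'
  exact absurd hfall (not_fallibleTop_prem_of_mem_Kn ht)

theorem BuiltFrom.app {l : List (Arg L)} {r : InfRule L} (hr : r ∈ AS.Rs)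
    (hmap : l.map Arg.conc = r.ants) (hl : ∀ a ∈ l, BuiltFrom AS K E P a) :
    BuiltFrom AS K E P (.app l r) := by
  refine ⟨.app (fun a ha => (hl a ha).1) (Or.inl hr) hmap, fun B' hB' hfall => ?_,
    fun t ht => ?_⟩
  · rcases Arg.mem_subs_app.1 hB' with ⟨a, ha, hB'a⟩ | rfl
    · exact (hl a ha).2.1 B' hB'a hfall
    · exact absurd hfall (not_fallibleTop_app_of_mem_Rs hr)
  · obtain ⟨a, ha, hta⟩ := Arg.mem_premises_app.1 ht
    exact (hl a ha).2.2 hta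

theorem exists_builtFrom_of_sDer
    (hS : ∀ t ∈ S, ∃ D, D.conc = t ∧ BuiltFrom AS K E P D) {χ : L} (h : SDer AS S χ) :
    ∃ C, C.conc = χ ∧ BuiltFrom AS K E P C := by
  induction h with
  | prem ht => exact hS _ ht
  | @rule r hr _ ih =>
    obtain ⟨l, hmap, hl⟩ := List.exists_map_eq_of_forall_mem ih
    exact ⟨.app l r, rfl, .app hr hmap hl⟩

end BuiltFrom

theorem Complete.mem_of_fallibleSubsIn {cf : Set (Arg L) → Prop}
    (hE : Complete 𝒜 cf (defeats AS K slt) E) {C : Arg L} (hC𝒜 : C ∈ 𝒜)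
    (hC : FallibleSubsIn AS K E C) : C ∈ E :=
  hE.2 C hC𝒜 (acceptable_of_fallibleSubsIn hE.1.2.2 hC)

theorem cCons_premises_of_complete (hax : AxiomConsistent AS K) (hcl : CClassical AS)
    (hE : Complete (ArgsCSAF AS K) (CFwrt (attacks AS K)) (defeats AS K slt) E) :
    CCons AS (⋃ W ∈ E, W.premises) := by
  by_contra hinc
  obtain ⟨S, hST, hmin⟩ := exists_minCIncons_subset hinc
  have hsrc : ∀ t ∈ S, ∃ W ∈ E, t ∈ W.premises := fun t ht => by simpa using hST ht
  by_cases hSKp : ∃ s ∈ S, s ∈ K.Kp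
  · obtain ⟨s, hsS, hsKp⟩ := hSKp
    obtain ⟨ns, hns, hder⟩ := hcl S hmin s hsS
    have hreal : ∀ t ∈ S \ {s}, ∃ D, D.conc = t ∧ BuiltFrom AS K E (S \ {s}) D := by
      intro t ht
      obtain ⟨W, hW, htW⟩ := hsrc t ht.1
      exact ⟨.prem t, rfl, builtFrom_of_mem_subs hW (hE.1.1 hW).1 (Arg.prem_mem_subs htW)
        (by simpa [Arg.premises] using ht)⟩
    obtain ⟨D, rfl, hDarg, hD, hDP⟩ := exists_builtFrom_of_sDer hreal hder
    have hDcons : CCons AS D.premises := (hmin.2 _ (Set.sdiff_singleton_ssubset.2 hsS)).mono hDP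
    have hDE : D ∈ E := hE.mem_of_fallibleSubsIn ⟨hDarg, hDcons⟩ hD
    obtain ⟨W, hW, hsW⟩ := hsrc s hsS
    exact hE.1.2.1 D hDE W hW
      (attacks_of_mem_contr_conc (Arg.prem_mem_subs hsW) (Or.inr ⟨s, hsKp, rfl⟩) hns.2)
  · push Not at hSKp
    refine hmin.1 (cCons_of_subset_Kn hax fun t ht => ?_)
    obtain ⟨W, hW, htW⟩ := hsrc t ht
    exact ((hE.1.1 hW).1.premises_subset htW).resolve_right (hSKp t ht)

theorem Complete.mem_of_builtFrom
    (hE : Complete 𝒜 (CFwrt (attacks AS K)) (defeats AS K slt) E)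
    (h𝒜 : ∀ C, IsArg AS K C → C.premises ⊆ ⋃ W ∈ E, W.premises → C ∈ 𝒜)
    {P : Set L} (hP : P ⊆ ⋃ W ∈ E, W.premises) {C : Arg L}
    (hC : BuiltFrom AS K E P C) : C ∈ E :=
  hE.mem_of_fallibleSubsIn (h𝒜 C hC.1 (hC.2.2.trans hP)) hC.2.1

theorem Complete.exists_mem_conc_eq_of_clRs
    (hE : Complete 𝒜 (CFwrt (attacks AS K)) (defeats AS K slt) E)
    (hEarg : ∀ W ∈ E, IsArg AS K W)
    (h𝒜 : ∀ C, IsArg AS K C → C.premises ⊆ ⋃ W ∈ E, W.premises → C ∈ 𝒜)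
    {χ : L} (h : ClRs AS (Arg.conc '' E) χ) :
    ∃ W ∈ E, W.conc = χ := by
  have hreal : ∀ t ∈ Arg.conc '' E,
      ∃ D, D.conc = t ∧ BuiltFrom AS K E (⋃ W ∈ E, W.premises) D := by
    rintro _ ⟨W, hW, rfl⟩
    exact ⟨W, rfl, builtFrom_of_mem_subs hW (hEarg W hW) (Arg.mem_subs_self W)
      (Set.subset_biUnion_of_mem hW)⟩
  obtain ⟨C, rfl, hC⟩ := exists_builtFrom_of_sDer hreal h.sDer
  exact ⟨C, hE.mem_of_builtFrom h𝒜 subset_rfl hC, rfl⟩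

theorem Complete.not_contrad_conc
    (hE : Complete 𝒜 (CFwrt (attacks AS K)) (defeats AS K slt) E)
    (hEarg : ∀ W ∈ E, IsArg AS K W)
    (h𝒜 : ∀ C, IsArg AS K C → C.premises ⊆ ⋃ W ∈ E, W.premises → C ∈ 𝒜)
    (hax : AxiomConsistent AS K)
    (hclosed : ContraClosed AS ∨ TransClosed AS) {A B : Arg L} (hA : A ∈ E) (hB : B ∈ E) :
    ¬ contrad AS A.conc B.conc := by
  intro hc
  set F : Set L := {t | ∃ C ∈ A.subs ∪ B.subs, fallibleTop AS K C ∧ C.conc = t}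
  set P := A.premises ∪ B.premises
  have hAS : SDer AS (F ∪ P ∩ K.Kn) A.conc := sDer_conc_of_fallibleTop (hEarg A hA)
    (fun C hC hf => Or.inl ⟨C, Or.inl hC, hf, rfl⟩) (fun t ht => Or.inr ⟨Or.inl ht.1, ht.2⟩)
  have hBS : SDer AS (F ∪ P ∩ K.Kn) B.conc := sDer_conc_of_fallibleTop (hEarg B hB)
    (fun C hC hf => Or.inl ⟨C, Or.inr hC, hf, rfl⟩) (fun t ht => Or.inr ⟨Or.inr ht.1, ht.2⟩)
  rcases sDer_sdiff_or_exists_contrad hclosed Set.subset_union_left hc hAS hBS with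
    ⟨h₁, h₂⟩ | ⟨_, ⟨C', hC', hfall, rfl⟩, ns, hns, hder⟩
  · exact cCons_of_subset_Kn hax (fun t ht => (ht.1.resolve_left ht.2).2) _ _ hc ⟨h₁, h₂⟩
  have hreal : ∀ t ∈ F ∪ P ∩ K.Kn, ∃ D, D.conc = t ∧ BuiltFrom AS K E P D := by
    rintro t (⟨C, hC | hC, -, rfl⟩ | ⟨htP, htKn⟩)
    · exact ⟨C, rfl, builtFrom_of_mem_subs hA (hEarg A hA) hC
        ((Arg.premises_subset_of_mem_subs hC).trans Set.subset_union_left)⟩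
    · exact ⟨C, rfl, builtFrom_of_mem_subs hB (hEarg B hB) hC
        ((Arg.premises_subset_of_mem_subs hC).trans Set.subset_union_right)⟩
    · exact ⟨.prem t, rfl, builtFrom_prem_of_mem_Kn htKn htP⟩
  obtain ⟨C, rfl, hC⟩ := exists_builtFrom_of_sDer hreal hder
  have hCE : C ∈ E := hE.mem_of_builtFrom h𝒜
    (Set.union_subset (Set.subset_biUnion_of_mem hA) (Set.subset_biUnion_of_mem hB)) hC
  rcases hC' with hC' | hC'
  · exact hE.1.2.1 C hCE A hA (attacks_of_mem_contr_conc hC' hfall hns.2)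
  · exact hE.1.2.1 C hCE B hB (attacks_of_mem_contr_conc hC' hfall hns.2)

theorem Complete.consistent_clRs_conc
    (hE : Complete 𝒜 (CFwrt (attacks AS K)) (defeats AS K slt) E)
    (hEarg : ∀ W ∈ E, IsArg AS K W)
    (h𝒜 : ∀ C, IsArg AS K C → C.premises ⊆ ⋃ W ∈ E, W.premises → C ∈ 𝒜)
    (hWD : WellDefinedSAF AS K) :
    Consistent AS {φ | ClRs AS (Arg.conc '' E) φ} := by
  rintro ⟨φ, ψ, hφ, hψ, hψφ⟩
  obtain ⟨A, hA, rfl⟩ := hE.exists_mem_conc_eq_of_clRs hEarg h𝒜 hφ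
  obtain ⟨B, hB, rfl⟩ := hE.exists_mem_conc_eq_of_clRs hEarg h𝒜 hψ
  by_cases hφψ : A.conc ∈ AS.contr B.conc
  · exact hE.not_contrad_conc hEarg h𝒜 hWD.1 hWD.2.2 hA hB ⟨hφψ, hψφ⟩
  · have hfall := fallibleTop_of_contrary_conc hWD.2.1 (hEarg A hA) ⟨hψφ, hφψ⟩
    exact hE.1.2.1 B hB A hA (attacks_of_mem_contr_conc (Arg.mem_subs_self A) hfall hψφ)

/-- Theorem: indirect consistency: in a well-defined (c-)SAF with a
reasonable ordering, the strict closure of the conclusions of an att-complete extension is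
consistent. -/
theorem statement7 {L : Type} (AS : ArgSystem L) (K : KB L) (pre : Arg L → Arg L → Prop)
    (𝒜 : Set (Arg L))
    (hcase :
      (𝒜 = ArgsSAF AS K ∧ WellDefinedSAF AS K) ∨
      (𝒜 = ArgsCSAF AS K ∧ WellDefinedCSAF AS K))
    (hreas : Reasonable AS K pre)
    (E : Set (Arg L))
    (hE : Complete 𝒜 (CFwrt (attacks AS K)) (defeats AS K (sprec pre)) E) :
    Consistent AS {φ | ClRs AS (Arg.conc '' E) φ} := by
  rcases hcase with ⟨rfl, hWD⟩ | ⟨rfl, hWD, hcl⟩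
  · exact hE.consistent_clRs_conc (fun W hW => hE.1.1 hW) (fun C hC _ => hC) hWD
  · have hprem := cCons_premises_of_complete hWD.1 hcl hE
    exact hE.consistent_clRs_conc (fun W hW => (hE.1.1 hW).1)
      (fun C hC hP => ⟨hC, hprem.mono hP⟩) hWD

end ASPIC
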